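/- Let g : ℝ → ℝ be twice continuously differentiable on [a,b] with a < b, and let m₂ be a lower bound for g'' on [a,b]. Then g((a+b)/2) + (m₂/24)(b-a)² ≤ (1/(b-a))∫_a^b g(t) dt ≤ (g(a)+g(b))/2 - (m₂/12)(b-a)². -/

import Mathlib

/-!
Subtracting `m₂ t² / 2` from `g` leaves a function `h` with `h'' = g'' - m₂ ≥ 0`, hence convex on
`[a, b]`. The Hermite–Hadamard inequality `h ((a + b) / 2) ≤ (1 / (b - a)) ∫ h ≤ (h a + h b) / 2`
then gives both bounds once the integral of the quadratic is computed exactly.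
-/

open Set intervalIntegral
open MeasureTheory (volume)

namespace ConvexOn

variable {f : ℝ → ℝ} {a b : ℝ}

theorem le_chord (hf : ConvexOn ℝ (Icc a b) f) (hab : a < b) {t : ℝ} (ht : t ∈ Icc a b) :
    f t ≤ ((b - t) * f a + (t - a) * f b) / (b - a) := by
  have hba : b - a ≠ 0 := (sub_pos.2 hab).ne'
  have key := hf.2 (left_mem_Icc.2 hab.le) (right_mem_Icc.2 hab.le)
    (div_nonneg (sub_nonneg.2 ht.2) (sub_pos.2 hab).le)
    (div_nonneg (sub_nonneg.2 ht.1) (sub_pos.2 hab).le)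
    (by field_simp; ring)
  simp only [smul_eq_mul] at key
  have ht_eq : (b - t) / (b - a) * a + (t - a) / (b - a) * b = t := by field_simp; ring
  rw [ht_eq] at key
  exact key.trans_eq (by ring)

theorem integral_le_trapezoid (hf : ConvexOn ℝ (Icc a b) f) (hfi : IntervalIntegrable f volume a b)
    (hab : a < b) : ∫ t in a..b, f t ≤ (b - a) * (f a + f b) / 2 := by
  calc ∫ t in a..b, f t
      ≤ ∫ t in a..b, ((b - t) * f a + (t - a) * f b) / (b - a) :=
        integral_mono_on hab.le hfi (by apply Continuous.intervalIntegrable; fun_prop)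
          fun t ht ↦ hf.le_chord hab ht
    _ = (b - a) * (f a + f b) / 2 := by
        have hba : b - a ≠ 0 := (sub_pos.2 hab).ne'
        rw [integral_div, integral_add (by apply Continuous.intervalIntegrable; fun_prop)
          (by apply Continuous.intervalIntegrable; fun_prop)]
        simp only [integral_mul_const, integral_comp_sub_left (fun x ↦ x),
          integral_comp_sub_right (fun x ↦ x), integral_id]
        field_simp
        ring

theorem midpoint_le_integral (hf : ConvexOn ℝ (Icc a b) f)
    (hfi : IntervalIntegrable f volume a b) (hab : a ≤ b) :
    (b - a) * f ((a + b) / 2) ≤ ∫ t in a..b, f t := by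
  have hreflect_mem : ∀ t ∈ Icc a b, a + b - t ∈ Icc a b := fun t ht ↦
    ⟨by linarith [ht.2], by linarith [ht.1]⟩
  have hfi_reflect : IntervalIntegrable (fun t ↦ f (a + b - t)) volume a b := by
    simpa using (hfi.comp_sub_left (a + b)).symm
  have hmid : ∀ t ∈ Icc a b, f ((a + b) / 2) ≤ (f t + f (a + b - t)) / 2 := by
    intro t ht
    have key := hf.2 ht (hreflect_mem t ht) (by norm_num : (0 : ℝ) ≤ 1 / 2)
      (by norm_num : (0 : ℝ) ≤ 1 / 2) (by norm_num)
    simp only [smul_eq_mul] at key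
    rw [show 1 / 2 * t + 1 / 2 * (a + b - t) = (a + b) / 2 by ring] at key
    exact key.trans_eq (by ring)
  have hreflect : ∫ t in a..b, f (a + b - t) = ∫ t in a..b, f t := by
    rw [integral_comp_sub_left f (a + b), add_sub_cancel_right, add_sub_cancel_left]
  calc (b - a) * f ((a + b) / 2)
      = ∫ _ in a..b, f ((a + b) / 2) := by rw [integral_const, smul_eq_mul]
    _ ≤ ∫ t in a..b, (f t + f (a + b - t)) / 2 :=
        integral_mono_on hab intervalIntegrable_const ((hfi.add hfi_reflect).div_const 2) hmid
    _ = ∫ t in a..b, f t := by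
        rw [integral_div, integral_add hfi hfi_reflect, hreflect]; ring

end ConvexOn

theorem convexOn_sub_half_mul_sq {D : Set ℝ} (hD : Convex ℝ D) {g g' g'' : ℝ → ℝ} {m : ℝ}
    (hg' : ∀ x ∈ D, HasDerivWithinAt g (g' x) D x)
    (hg'' : ∀ x ∈ D, HasDerivWithinAt g' (g'' x) D x) (hm : ∀ x ∈ D, m ≤ g'' x) :
    ConvexOn ℝ D fun x ↦ g x - m / 2 * x ^ 2 := by
  refine convexOn_of_hasDerivWithinAt2_nonneg hD
    ((HasDerivWithinAt.continuousOn hg').sub (by fun_prop))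
    (f' := fun x ↦ g' x - m * x) (f'' := fun x ↦ g'' x - m) (fun x hx ↦ ?_) (fun x hx ↦ ?_)
    (fun x hx ↦ sub_nonneg.2 (hm x (interior_subset hx)))
  · refine (((hg' x (interior_subset hx)).mono interior_subset).sub
      ((hasDerivAt_pow 2 x).const_mul (m / 2)).hasDerivWithinAt).congr_deriv ?_
    norm_num
    ring
  · exact (((hg'' x (interior_subset hx)).mono interior_subset).sub
      ((hasDerivAt_id x).const_mul m).hasDerivWithinAt).congr_deriv (by simp)

theorem simpson_stmt0 (a b m₂ : ℝ) (hab : a < b) (g g' g'' : ℝ → ℝ)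
    (hg' : ∀ x ∈ Set.Icc a b, HasDerivWithinAt g (g' x) (Set.Icc a b) x)
    (hg'' : ∀ x ∈ Set.Icc a b, HasDerivWithinAt g' (g'' x) (Set.Icc a b) x)
    (hm : ∀ x ∈ Set.Icc a b, m₂ ≤ g'' x) :
    g ((a + b) / 2) + m₂ / 24 * (b - a) ^ 2 ≤ (1 / (b - a)) * ∫ t in a..b, g t ∧
      (1 / (b - a)) * ∫ t in a..b, g t ≤ (g a + g b) / 2 - m₂ / 12 * (b - a) ^ 2 := by
  set h : ℝ → ℝ := fun x ↦ g x - m₂ / 2 * x ^ 2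
  have hconv : ConvexOn ℝ (Icc a b) h := convexOn_sub_half_mul_sq (convex_Icc a b) hg' hg'' hm
  have hgi : IntervalIntegrable g volume a b :=
    (HasDerivWithinAt.continuousOn hg').intervalIntegrable_of_Icc hab.le
  have hquad : IntervalIntegrable (fun x ↦ m₂ / 2 * x ^ 2) volume a b := by
    apply Continuous.intervalIntegrable; fun_prop
  have hint : ∫ t in a..b, h t = (∫ t in a..b, g t) - m₂ / 2 * ((b ^ 3 - a ^ 3) / 3) := by
    rw [integral_sub hgi hquad, integral_const_mul, integral_pow]; norm_num
  have hmid := hconv.midpoint_le_integral (hgi.sub hquad) hab.le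
  have htrap := hconv.integral_le_trapezoid (hgi.sub hquad) hab
  rw [hint] at hmid htrap
  rw [one_div, inv_mul_eq_div, le_div_iff₀ (sub_pos.2 hab), div_le_iff₀ (sub_pos.2 hab)]
  simp only [h] at hmid htrap
  constructor <;> linarith
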